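/- Toeplitz operators as quantum harmonic analysis convolutions: for $a\in L^p(\Omega,d\lambda)$, $1\le p\le\infty$, the Toeplitz operator $T_a$ on $\mathcal{A}^2_\nu(\Omega)$ equals $c_\nu(a\ast\Phi)$ where $\Phi=1\otimes 1$; i.e., $\langle T_a f_1,f_2\rangle_\nu = c_\nu\int_G a(x\cdot 0)\,\langle (\pi_\nu(x)1\otimes\pi_\nu(x)1)f_1,f_2\rangle_\nu\,d\mu_G(x)$ for all $f_1,f_2\in\mathcal{A}^2_\nu$. -/
import Mathlib


open MeasureTheory
open scoped ComplexInnerProductSpace ComplexConjugate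

/-- The rank-one operator `u ⊗ v : f ↦ ⟨f,v⟩ u` (inner product linear in `f`). -/
noncomputable def rankOne {H : Type*} [NormedAddCommGroup H] [InnerProductSpace ℂ H]
    (u v : H) : H →L[ℂ] H :=
  (innerSL ℂ v).smulRight u

/-- Toeplitz operators as QHA convolutions: with `u(x) = π_ν(x)1 = √(h(x,x)^{ν+p}) K^ν_{x·0}`,
the reproducing formula `f(z) = ⟨f, K^ν_z⟩`, and the normalization
`c ∫_G F(x·0) h(x,x)^{ν+p} dμ_G = ∫_Ω F dv_ν`, the Toeplitz operator
`⟨T_a f₁, f₂⟩ = ∫_Ω a f₁ \overline{f₂} dv_ν` satisfies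
`⟨T_a f₁, f₂⟩ = c ∫_G a(x·0) ⟨(π_ν(x)1 ⊗ π_ν(x)1) f₁, f₂⟩ dμ_G`, i.e. `T_a = c (a ∗ Φ)`.
(Here the pairing `⟨f, g⟩`, linear in the first argument, is `⟪g, f⟫` in Mathlib.) -/
theorem stmt9 {G Ω H : Type*} [MeasurableSpace G] [MeasurableSpace Ω]
    [NormedAddCommGroup H] [InnerProductSpace ℂ H] [CompleteSpace H]
    (μG : Measure G) (vν : Measure Ω) (c : ℝ) (hc : 0 < c)
    (p : G → Ω) (u : G → H) (Kker : Ω → H) (w : G → ℝ) (hw : ∀ x, 0 < w x)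
    (hu : ∀ x, u x = (Real.sqrt (w x) : ℂ) • Kker (p x))
    (ev : H → Ω → ℂ) (hrep : ∀ (f : H) (z : Ω), ev f z = ⟪Kker z, f⟫)
    (hchange : ∀ F : Ω → ℂ, Integrable F vν →
      (c : ℂ) * ∫ x, F (p x) * (w x : ℂ) ∂μG = ∫ z, F z ∂vν)
    (a : Ω → ℂ) (Ta : H →L[ℂ] H)
    (hTa : ∀ f₁ f₂ : H, ⟪f₂, Ta f₁⟫ = ∫ z, a z * (ev f₁ z * conj (ev f₂ z)) ∂vν)
    (hint : ∀ f₁ f₂ : H, Integrable (fun z => a z * (ev f₁ z * conj (ev f₂ z))) vν) :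
    ∀ f₁ f₂ : H, ⟪f₂, Ta f₁⟫ =
      (c : ℂ) * ∫ x, a (p x) * ⟪f₂, rankOne (u x) (u x) f₁⟫ ∂μG := by
  intro f₁ f₂
  have key : ∀ x, a (p x) * ⟪f₂, rankOne (u x) (u x) f₁⟫ =
      (a (p x) * (ev f₁ (p x) * conj (ev f₂ (p x)))) * (w x : ℂ) := by
    intro x
    have h1 : ⟪f₂, rankOne (u x) (u x) f₁⟫ = ⟪u x, f₁⟫ * ⟪f₂, u x⟫ := by
      simp [rankOne, inner_smul_right, mul_comm]
    rw [h1, hu x]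
    have hs : (starRingEnd ℂ) ((Real.sqrt (w x) : ℂ)) = (Real.sqrt (w x) : ℂ) := by
      simp
    rw [inner_smul_left, inner_smul_right, hs, hrep, hrep,
      ← inner_conj_symm f₂ (Kker (p x))]
    have hw2 : (Real.sqrt (w x) : ℂ) * (Real.sqrt (w x) : ℂ) = (w x : ℂ) := by
      rw [← Complex.ofReal_mul, Real.mul_self_sqrt (hw x).le]
    ring_nf
    rw [mul_comm]
    ring_nf
    rw [show ((Real.sqrt (w x)):ℂ)^2 = (w x : ℂ) by rw [sq]; exact hw2]
    ring
  calc ⟪f₂, Ta f₁⟫ = ∫ z, a z * (ev f₁ z * conj (ev f₂ z)) ∂vν := hTa f₁ f₂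
    _ = (c : ℂ) * ∫ x, (a (p x) * (ev f₁ (p x) * conj (ev f₂ (p x)))) * (w x : ℂ) ∂μG :=
        (hchange _ (hint f₁ f₂)).symm
    _ = (c : ℂ) * ∫ x, a (p x) * ⟪f₂, rankOne (u x) (u x) f₁⟫ ∂μG := by
        congr 1; exact integral_congr_ae (Filter.Eventually.of_forall fun x => (key x).symm)
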